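/- Let a, b : Fin n → A be permutation-equivalent words with canonical permutations σ_{a,b} and σ_{b,a}. Then for every letter x in the image of a and every j below the occurrence count of x, pos_{a,x}(j) = σ_{b,a}(pos_{b,x}(j)). -/

import Mathlib

variable {A : Type*} [DecidableEq A]

/-- The finite set of positions at which the letter `x` occurs in the word `a`. -/
def occFinset {n : ℕ} (a : Fin n → A) (x : A) : Finset (Fin n) :=
  Finset.univ.filter (fun i => a i = x)

/-- The number of occurrences of the letter `x` in the word `a`. -/
def cnt {n : ℕ} (a : Fin n → A) (x : A) : ℕ := (occFinset a x).card

/-- The position of the `j`-th occurrence (in increasing order) of the letter `x`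
in the word `a`. -/
def pos {n : ℕ} (a : Fin n → A) (x : A) (j : Fin (cnt a x)) : Fin n :=
  ((occFinset a x).orderIsoOfFin rfl j : Fin n)

/-- The occurrence index of the position `i` among the increasingly enumerated
occurrences of the letter `a i` in the word `a`. -/
def occ {n : ℕ} (a : Fin n → A) (i : Fin n) : Fin (cnt a (a i)) :=
  ((occFinset a (a i)).orderIsoOfFin rfl).symm ⟨i, by simp [occFinset]⟩

lemma apply_pos {n : ℕ} (a : Fin n → A) (x : A) (j : Fin (cnt a x)) :
    a (pos a x j) = x := by
  have h := ((occFinset a x).orderIsoOfFin rfl j).2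
  simp only [occFinset, Finset.mem_filter] at h
  exact h.2

/-- The canonical permutation `σ_{a,b}` associated with two words having the same
occurrence counts: `σ_{a,b}(i) = pos_{b, a i}(occ_a i)`. -/
def canonPerm {n : ℕ} (a b : Fin n → A) (h : ∀ x, cnt a x = cnt b x) (i : Fin n) : Fin n :=
  pos b (a i) (Fin.cast (h (a i)) (occ a i))

/-- The map induced by a word morphism `φ : a → b` (i.e. `a = b ∘ φ`) on the
occurrence sets of the letter `x`: `⌊φ⌋_x (j) = occ_b (φ (pos_{a,x} j))`. -/
def flr {m n : ℕ} (a : Fin m → A) (b : Fin n → A) (φ : Fin m → Fin n)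
    (hφ : a = b ∘ φ) (x : A) (j : Fin (cnt a x)) : Fin (cnt b x) :=
  Fin.cast (congrArg (cnt b) ((congrFun hφ (pos a x j)).symm.trans (apply_pos a x j)))
    (occ b (φ (pos a x j)))

lemma pos_congr {n : ℕ} (a : Fin n → A) {x y : A} (h : x = y)
    (j : Fin (cnt a x)) (k : Fin (cnt a y)) (hjk : (j : ℕ) = (k : ℕ)) :
    pos a x j = pos a y k := by
  subst h
  congr 1
  exact Fin.ext hjk

lemma occ_val_eq {n : ℕ} (b : Fin n → A) {x : A} (i : Fin n) (hi : b i = x)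
    (j : Fin (cnt b x)) (hij : pos b x j = i) : (occ b i : ℕ) = (j : ℕ) := by
  subst hi
  unfold occ
  have : (⟨i, by simp [occFinset]⟩ : occFinset b (b i)) =
      (occFinset b (b i)).orderIsoOfFin rfl j := by
    exact Subtype.ext hij.symm
  rw [this]
  exact congrArg Fin.val (((occFinset b (b i)).orderIsoOfFin rfl).symm_apply_apply j)

/-- `pos_{a,x}(j) = σ_{b,a}(pos_{b,x}(j))` for every letter `x` in the image of
`a` and every `j` below the occurrence count of `x`. -/
theorem pos_eq_canonPerm_pos {n : ℕ} (a b : Fin n → A)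
    (hab : ∀ x, cnt a x = cnt b x) (x : A) (hx : ∃ i, a i = x) (j : Fin (cnt a x)) :
    pos a x j =
      canonPerm b a (fun y => (hab y).symm) (pos b x (Fin.cast (hab x) j)) := by
  unfold canonPerm
  refine pos_congr a (apply_pos b x (Fin.cast (hab x) j)).symm j _ ?_
  rw [Fin.coe_cast]
  exact (occ_val_eq b _ (apply_pos b x (Fin.cast (hab x) j)) _ rfl).symm
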